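/- Fix t > 0 and x ∈ [-1,1]. For all y ∈ [-1,1], the transition density p(t,x,y) of Brownian motion killed at exit from [-1,1], given by the image-method series p(t,x,y) = (1/√t) ∑_{n ∈ ℤ} [φ((x-y-4n)/√t) - φ((x+y-2-4n)/√t)], satisfies p(t,x,y) ≤ (3 + ⌊√t/4⌋) · (1/√t) φ((x-y)/√t). -/
import Mathlib


open Real Set

/-- The standard Gaussian density `φ(u) = e^{-u²/2}/√(2π)`. -/
noncomputable def stdGauss (u : ℝ) : ℝ := Real.exp (-u ^ 2 / 2) / Real.sqrt (2 * π)

lemma stdGauss_nonneg (u : ℝ) : 0 ≤ stdGauss u := by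
  unfold stdGauss
  positivity

lemma stdGauss_le {u v : ℝ} (h : u ^ 2 ≤ v ^ 2) : stdGauss v ≤ stdGauss u := by
  unfold stdGauss
  have hd : 0 < Real.sqrt (2 * π) := Real.sqrt_pos.mpr (by positivity)
  have he : Real.exp (-v ^ 2 / 2) ≤ Real.exp (-u ^ 2 / 2) :=
    Real.exp_le_exp.mpr (by linarith)
  exact div_le_div_of_nonneg_right he hd.le

lemma stdGauss_div_le {s : ℝ} (hs : 0 < s) {u v : ℝ} (h : u ^ 2 ≤ v ^ 2) :
    stdGauss (v / s) ≤ stdGauss (u / s) := by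
  apply stdGauss_le
  rw [div_pow, div_pow]
  gcongr

lemma summable_gauss (c : ℝ) {s : ℝ} (hs : 0 < s) :
    Summable fun n : ℤ => stdGauss ((c - 4 * n) / s) := by
  have ht' : 0 < 8 / (π * s ^ 2) := by positivity
  have h := (HurwitzKernelBounds.summable_f_int 0 (-c / 4) ht').mul_left
    (1 / Real.sqrt (2 * π))
  refine h.congr fun n => ?_
  simp only [HurwitzKernelBounds.f_int, pow_zero, one_mul]
  unfold stdGauss
  have hπ : π ≠ 0 := Real.pi_ne_zero
  have hs' : s ≠ 0 := ne_of_gt hs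
  have he : Real.exp (-π * ((n : ℝ) + -c / 4) ^ 2 * (8 / (π * s ^ 2)))
      = Real.exp (-((c - 4 * n) / s) ^ 2 / 2) := by
    rw [Real.exp_eq_exp]
    field_simp
    ring
  rw [he]
  ring

/-- For `t > 0` and `x, y ∈ [-1,1]`, the killed transition density
`p(t,x,y) = (1/√t) ∑_{n ∈ ℤ} [φ((x-y-4n)/√t) - φ((x+y-2-4n)/√t)]` satisfies
`p(t,x,y) ≤ (3 + ⌊√t/4⌋) · (1/√t) φ((x-y)/√t)`. -/
theorem killed_density_le_gaussian {t : ℝ} (ht : 0 < t) {x y : ℝ}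
    (hx : x ∈ Icc (-1 : ℝ) 1) (hy : y ∈ Icc (-1 : ℝ) 1) :
    (1 / Real.sqrt t) * ∑' n : ℤ, (stdGauss ((x - y - 4 * n) / Real.sqrt t)
        - stdGauss ((x + y - 2 - 4 * n) / Real.sqrt t))
      ≤ (3 + (⌊Real.sqrt t / 4⌋₊ : ℝ)) * ((1 / Real.sqrt t) * stdGauss ((x - y) / Real.sqrt t)) := by
  obtain ⟨hx1, hx2⟩ := hx
  obtain ⟨hy1, hy2⟩ := hy
  set s := Real.sqrt t with hsdef
  have hs : 0 < s := Real.sqrt_pos.mpr ht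
  set A : ℤ → ℝ := fun n => stdGauss ((x - y - 4 * n) / s) with hA
  set B : ℤ → ℝ := fun n => stdGauss ((x + y - 2 - 4 * n) / s) with hB
  have hsumA : Summable A := summable_gauss (x - y) hs
  have hsumB : Summable B := summable_gauss (x + y - 2) hs
  -- The key bound on the series
  have hA00 : A 0 = stdGauss ((x - y) / s) := by
    simp [hA]
  have hA10 : A 1 ≤ A 0 := by
    rw [hA]
    simp only [Int.cast_one, Int.cast_zero]
    apply stdGauss_div_le hs
    nlinarith
  have h0 : 0 ≤ A 0 := stdGauss_nonneg _
  -- split off indices 0 and 1 from the sum of A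
  have hsplit := Summable.sum_add_tsum_compl (s := ({0, 1} : Finset ℤ)) hsumA
  have hpair : ∑ i ∈ ({0, 1} : Finset ℤ), A i = A 0 + A 1 :=
    Finset.sum_pair (by decide)
  -- the tail of A is dominated by the sum of B via an injection
  have htail : (∑' i : ↑((({0, 1} : Finset ℤ) : Set ℤ)ᶜ), A i) ≤ ∑' n, B n := by
    set S : Set ℤ := ((({0, 1} : Finset ℤ) : Set ℤ)ᶜ) with hS
    have hmem : ∀ n : ℤ, n ∈ S → n ≠ 0 ∧ n ≠ 1 := by
      intro n hn
      simp only [hS, Set.mem_compl_iff, Finset.coe_insert, Finset.coe_singleton,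
        Set.mem_insert_iff, Set.mem_singleton_iff, not_or] at hn
      exact hn
    refine Summable.tsum_le_tsum_of_inj (fun p : S => if 1 ≤ p.1 then p.1 - 1 else p.1)
      ?_ (fun c _ => stdGauss_nonneg _) ?_ (hsumA.subtype _) hsumB
    · rintro ⟨a, ha⟩ ⟨b, hb⟩ hab
      obtain ⟨ha0, ha1⟩ := hmem a ha
      obtain ⟨hb0, hb1⟩ := hmem b hb
      dsimp only at hab
      apply Subtype.ext
      dsimp only
      by_cases h1 : 1 ≤ a <;> by_cases h2 : 1 ≤ b <;> simp only [h1, h2, if_true, if_false] at hab <;> omega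
    · rintro ⟨n, hn⟩
      obtain ⟨hn0, hn1⟩ := hmem n hn
      dsimp only
      by_cases h1 : 1 ≤ n
      · have h2 : (2 : ℤ) ≤ n := by omega
        have h2' : (2 : ℝ) ≤ (n : ℝ) := by exact_mod_cast h2
        simp only [h1, if_pos, hA, hB]
        have harg : x + y - 2 - 4 * ((n : ℝ) - 1) = x + y + 2 - 4 * n := by ring
        rw [show ((n - 1 : ℤ) : ℝ) = (n : ℝ) - 1 by push_cast; ring, harg]
        apply stdGauss_div_le hs
        nlinarith [mul_nonneg (by linarith : (0:ℝ) ≤ y + 1)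
          (by linarith : (0:ℝ) ≤ 4 * (n : ℝ) - x - 1)]
      · have h2 : n ≤ -1 := by omega
        have h2' : (n : ℝ) ≤ -1 := by exact_mod_cast h2
        simp only [h1, if_neg, hA, hB, if_false]
        apply stdGauss_div_le hs
        nlinarith [mul_nonneg (by linarith : (0:ℝ) ≤ 1 - y)
          (by linarith : (0:ℝ) ≤ 2 * x - 2 - 8 * (n : ℝ))]
  have key : (∑' n : ℤ, (A n - B n)) ≤ A 0 + A 1 := by
    rw [Summable.tsum_sub hsumA hsumB]
    have : (∑' n, A n) ≤ (A 0 + A 1) + ∑' n, B n := by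
      rw [← hsplit, hpair]
      linarith
    linarith
  have hbound : (∑' n : ℤ, (A n - B n)) ≤ 2 * A 0 := by linarith
  have hm : (0 : ℝ) ≤ (⌊Real.sqrt t / 4⌋₊ : ℝ) := Nat.cast_nonneg _
  have hsinv : (0 : ℝ) ≤ 1 / s := by positivity
  calc (1 / s) * ∑' n : ℤ, (A n - B n)
      ≤ (1 / s) * (2 * A 0) := mul_le_mul_of_nonneg_left hbound hsinv
    _ = 2 * ((1 / s) * A 0) := by ring
    _ ≤ (3 + (⌊Real.sqrt t / 4⌋₊ : ℝ)) * ((1 / s) * A 0) := by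
        apply mul_le_mul_of_nonneg_right (by linarith) (mul_nonneg hsinv h0)
    _ = (3 + (⌊Real.sqrt t / 4⌋₊ : ℝ)) * ((1 / s) * stdGauss ((x - y) / s)) := by
        rw [hA00]
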